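/- arXiv:1810.11312 — 6 statements merged into one kernel-verified Lean document; each statement's English description precedes it below -/
import Mathlib

section
/- Let W be any M×4 complex matrix with columns w_1, w_2, w_3, w_4, let x_1,...,x_4 be complex numbers, let X_Q be the TBH code matrix of x_1,...,x_4, and let a(ω) = (1, e^{-iω},..., e^{-i(M-1)ω}) be the row array response vector. Then for every real ω, Σ_{t=1}^{4} |a(ω)·(W·X_Q) e_t|² = α·Σ_{n=1}^{4} |W_n(ω)|² + 2β·Re(W_1(ω)·conj(W_3(ω)) + W_2(ω)·conj(W_4(ω))), where W_n(ω) = a(ω)·w_n, α = Σ_{i=1}^{4}|x_i|², β = 2·Re(x_1·conj(x_3) + x_2·conj(x_4)), and e_t is the t-th standard basis column vector of ℂ⁴. -/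
open Matrix

/-- The TBH quasi-orthogonal space-time block code matrix `X_Q`. -/
noncomputable def XQ (x₁ x₂ x₃ x₄ : ℂ) : Matrix (Fin 4) (Fin 4) ℂ :=
  !![x₁, starRingEnd ℂ x₂, x₃, starRingEnd ℂ x₄;
     x₂, -starRingEnd ℂ x₁, x₄, -starRingEnd ℂ x₃;
     x₃, starRingEnd ℂ x₄, x₁, starRingEnd ℂ x₂;
     x₄, -starRingEnd ℂ x₃, x₂, -starRingEnd ℂ x₁]

/-- The array response entry `e^{-i m ω}` for antenna `m`. -/
noncomputable def arv (M : ℕ) (ω : ℝ) (m : Fin M) : ℂ :=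
  Complex.exp (-Complex.I * ((m : ℕ) : ℂ) * (ω : ℂ))

/-- `W_n(ω) = a(ω) · w_n`, the Fourier transform of the `n`-th column of `W`. -/
noncomputable def colFT (M : ℕ) (W : Matrix (Fin M) (Fin 4) ℂ) (ω : ℝ) (n : Fin 4) : ℂ :=
  ∑ m : Fin M, arv M ω m * W m n

/-! The code is quasi-orthogonal: `X_Q X_Qᴴ = α I + β J`, where `J` swaps the coordinates
`1 ↔ 3` and `2 ↔ 4`. Writing `c = a(ω) W = (W₁(ω), …, W₄(ω))`, the left-hand side is the squared
norm of the row vector `c X_Q`, i.e. the Hermitian form `c (X_Q X_Qᴴ) cᴴ`, which evaluates to the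
right-hand side. -/

lemma sum_norm_sq_eq_re_dotProduct_star {n : Type*} [Fintype n] (v : n → ℂ) :
    ∑ i, ‖v i‖ ^ 2 = (v ⬝ᵥ star v).re := by
  simp [dotProduct, Complex.re_sum, Complex.mul_conj, Complex.sq_norm]

lemma vecMul_dotProduct_star_vecMul {m n : Type*} [Fintype m] [Fintype n]
    (c : m → ℂ) (X : Matrix m n ℂ) :
    c ᵥ* X ⬝ᵥ star (c ᵥ* X) = c ᵥ* (X * Xᴴ) ⬝ᵥ star c := by
  rw [star_vecMul, dotProduct_mulVec, vecMul_vecMul]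

def tbhGram (α β : ℝ) : Matrix (Fin 4) (Fin 4) ℂ :=
  !![(α : ℂ), 0, (β : ℂ), 0;
     0, (α : ℂ), 0, (β : ℂ);
     (β : ℂ), 0, (α : ℂ), 0;
     0, (β : ℂ), 0, (α : ℂ)]

lemma XQ_mul_conjTranspose (x₁ x₂ x₃ x₄ : ℂ) :
    XQ x₁ x₂ x₃ x₄ * (XQ x₁ x₂ x₃ x₄)ᴴ =
      tbhGram (‖x₁‖ ^ 2 + ‖x₂‖ ^ 2 + ‖x₃‖ ^ 2 + ‖x₄‖ ^ 2)
        (2 * (x₁ * starRingEnd ℂ x₃ + x₂ * starRingEnd ℂ x₄).re) := by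
  ext i j
  fin_cases i <;> fin_cases j <;> apply Complex.ext <;>
    simp only [XQ, tbhGram, mul_apply, conjTranspose_apply, of_apply, cons_val', cons_val,
      cons_val_zero, cons_val_one, cons_val_fin_one, Fin.sum_univ_four, Fin.zero_eta, Fin.mk_one,
      Fin.reduceFinMk, Fin.isValue, RCLike.star_def, map_neg, Complex.add_re, Complex.add_im,
      Complex.mul_re, Complex.mul_im, Complex.neg_re, Complex.neg_im, Complex.conj_re,
      Complex.conj_im, Complex.ofReal_re, Complex.ofReal_im, Complex.zero_re, Complex.zero_im,
      Complex.sq_norm, Complex.normSq_apply] <;> ring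

lemma re_vecMul_tbhGram_dotProduct_star (α β : ℝ) (c : Fin 4 → ℂ) :
    (c ᵥ* tbhGram α β ⬝ᵥ star c).re =
      α * ∑ n, ‖c n‖ ^ 2 + 2 * β * (c 0 * starRingEnd ℂ (c 2) + c 1 * starRingEnd ℂ (c 3)).re := by
  simp only [tbhGram, vecMul, dotProduct, of_apply, cons_val', cons_val, cons_val_zero,
    cons_val_one, cons_val_fin_one, Fin.sum_univ_four, Fin.isValue, Pi.star_apply, RCLike.star_def,
    Complex.add_re, Complex.add_im, Complex.mul_re, Complex.mul_im, Complex.conj_re, Complex.conj_im,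
    Complex.ofReal_re, Complex.ofReal_im, Complex.zero_re, Complex.zero_im, Complex.sq_norm,
    Complex.normSq_apply]
  ring

lemma colFT_eq_vecMul (M : ℕ) (W : Matrix (Fin M) (Fin 4) ℂ) (ω : ℝ) :
    colFT M W ω = arv M ω ᵥ* W := rfl

/-- `∑_{t=1}^4 |a(ω)(W X_Q) e_t|² = α ∑_n |W_n(ω)|²
+ 2β Re(W₁(ω) conj(W₃(ω)) + W₂(ω) conj(W₄(ω)))`. -/
theorem stmt4 (M : ℕ) (W : Matrix (Fin M) (Fin 4) ℂ) (x₁ x₂ x₃ x₄ : ℂ) (ω : ℝ) :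
    (∑ t : Fin 4, ‖∑ m : Fin M, arv M ω m * (W * XQ x₁ x₂ x₃ x₄) m t‖ ^ 2) =
      (‖x₁‖ ^ 2 + ‖x₂‖ ^ 2 + ‖x₃‖ ^ 2 + ‖x₄‖ ^ 2) *
          (∑ n : Fin 4, ‖colFT M W ω n‖ ^ 2)
        + 2 * (2 * (x₁ * starRingEnd ℂ x₃ + x₂ * starRingEnd ℂ x₄).re) *
          (colFT M W ω 0 * starRingEnd ℂ (colFT M W ω 2)
            + colFT M W ω 1 * starRingEnd ℂ (colFT M W ω 3)).re := by
  have hcol : ∀ t, ∑ m : Fin M, arv M ω m * (W * XQ x₁ x₂ x₃ x₄) m t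
      = (colFT M W ω ᵥ* XQ x₁ x₂ x₃ x₄) t := fun t => by
    rw [colFT_eq_vecMul, vecMul_vecMul]; rfl
  simp only [hcol]
  rw [sum_norm_sq_eq_re_dotProduct_star, vecMul_dotProduct_star_vecMul, XQ_mul_conjTranspose,
    re_vecMul_tbhGram_dotProduct_star]
end

section
/- (Theorem 1) Let w_1, w_2, w_3, w_4 be complex sequences of length M (columns of an M×4 precoding matrix W) such that {w_1, w_2} and {w_3, w_4} are each complementary pairs, i.e., R_{w_1}(τ) + R_{w_2}(τ) = 0 and R_{w_3}(τ) + R_{w_4}(τ) = 0 for all τ ≠ 0, and the two pairs are mutually orthogonal complementary, i.e., R_{w_1,w_3}(τ) + R_{w_2,w_4}(τ) = 0 for all τ. Let x_1,...,x_4 be complex numbers, X_Q the TBH code matrix of x_1,...,x_4, and a(ω) = (1, e^{-iω},..., e^{-i(M-1)ω}). Then for every real ω, Σ_{t=1}^{4} |a(ω)·(W·X_Q) e_t|² = α·Σ_{n=1}^{4} R_{w_n}(0), where α = Σ_{i=1}^{4}|x_i|²; in particular the received signal sum power over the four time slots is independent of ω. -/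
/-!
Write `ŵ(ω) = a(ω)·w = Σ_m w(m) e^{-imω}`. The received power in slot `t` is `|(ŵ X_Q)_t|²`
with `ŵ = (ŵ₁, …, ŵ₄)`, and `X_Q X_Qᴴ = α I + β [[0, I], [I, 0]]` with `β = 2 Re(x₁x̄₃ + x₂x̄₄)`,
so the total power is `α Σ |ŵ_n|² + 2β Re(ŵ₁ conj ŵ₃ + ŵ₂ conj ŵ₄)`. By the correlation theorem
`ŵ conj v̂ = Σ_τ e^{iτω} R_{w,v}(τ)`, the complementarity hypotheses make
`|ŵ₁|² + |ŵ₂|²` and `|ŵ₃|² + |ŵ₄|²` equal to their `τ = 0` terms, and the mutual orthogonality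
kills the cross term.
-/

open Matrix

/-- Aperiodic crosscorrelation of two length-`M` complex sequences (regarded as
functions on `ℤ` vanishing outside `{0,...,M-1}`). -/
noncomputable def acf (M : ℕ) (w v : ℤ → ℂ) (τ : ℤ) : ℂ :=
  ∑ m ∈ Finset.range M, w m * (starRingEnd ℂ) (v ((m : ℤ) + τ))

open Finset ComplexConjugate

theorem sum_Icc_shift_eq_sum_range {β : Type*} [AddCommMonoid β] {M : ℕ} {g : ℤ → β}
    (hg : ∀ k : ℤ, (k < 0 ∨ (M : ℤ) ≤ k) → g k = 0) {m : ℕ} (hm : m < M) :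
    ∑ τ ∈ Icc (1 - (M : ℤ)) (M - 1), g (m + τ) = ∑ k ∈ range M, g k := by
  have hshift : Function.support (fun τ => g (m + τ)) ⊆ ↑(Icc (1 - (M : ℤ)) (M - 1)) := by
    intro τ hτ
    simp only [coe_Icc, Set.mem_Icc]
    by_contra h
    exact hτ (hg _ (by omega))
  have hcast : Function.support g ⊆ ((range M).map (Nat.castEmbedding : ℕ ↪ ℤ) : Set ℤ) := by
    intro k hk
    simp only [coe_map, coe_range, Set.mem_image, Set.mem_Iio, Nat.castEmbedding_apply]
    by_contra h
    exact hk (hg k (by by_contra h'; exact h ⟨k.toNat, by omega, by omega⟩))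
  calc ∑ τ ∈ Icc (1 - (M : ℤ)) (M - 1), g (m + τ)
      = ∑ᶠ τ, g (Equiv.addLeft (m : ℤ) τ) := (finsum_eq_sum_of_support_subset _ hshift).symm
    _ = ∑ᶠ k, g k := finsum_comp_equiv _
    _ = ∑ k ∈ range M, g k := by
      rw [finsum_eq_sum_of_support_subset _ hcast, sum_map]; rfl

noncomputable def dtft (M : ℕ) (ω : ℝ) (u : ℤ → ℂ) : ℂ :=
  ∑ m : Fin M, arv M ω m * u m

theorem dtft_eq_sum_range (M : ℕ) (ω : ℝ) (u : ℤ → ℂ) :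
    dtft M ω u = ∑ m ∈ range M, Complex.exp (-Complex.I * m * ω) * u m :=
  Fin.sum_univ_eq_sum_range (fun m : ℕ => Complex.exp (-Complex.I * m * ω) * u m) M

theorem dtft_mul_conj_dtft {M : ℕ} (ω : ℝ) (u : ℤ → ℂ) {v : ℤ → ℂ}
    (hv : ∀ k : ℤ, (k < 0 ∨ (M : ℤ) ≤ k) → v k = 0) :
    dtft M ω u * conj (dtft M ω v) =
      ∑ τ ∈ Icc (1 - (M : ℤ)) (M - 1), Complex.exp (Complex.I * τ * ω) * acf M u v τ := by
  simp only [acf, mul_sum]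
  rw [sum_comm, dtft_eq_sum_range, dtft_eq_sum_range, map_sum, sum_mul_sum]
  refine sum_congr rfl fun m hm => ?_
  let g : ℤ → ℂ := fun k => Complex.exp (Complex.I * (k - m) * ω) * (u m * conj (v k))
  have hg (k : ℤ) (hk : k < 0 ∨ (M : ℤ) ≤ k) : g k = 0 := by simp [g, hv k hk]
  calc _ = ∑ k ∈ range M, g k := sum_congr rfl fun k _ => ?_
    _ = ∑ τ ∈ Icc (1 - (M : ℤ)) (M - 1), g (m + τ) :=
      (sum_Icc_shift_eq_sum_range hg (mem_range.1 hm)).symm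
    _ = _ := sum_congr rfl fun τ _ => ?_
  · rw [map_mul, ← Complex.exp_conj]
    simp only [g, map_mul, map_neg, Complex.conj_I, Complex.conj_natCast, Complex.conj_ofReal]
    have hexp : Complex.exp (Complex.I * (((k : ℤ) : ℂ) - m) * ω) =
        Complex.exp (-Complex.I * m * ω) * Complex.exp (-(-Complex.I) * k * ω) := by
      rw [← Complex.exp_add]; push_cast; ring_nf
    rw [hexp]
    ring
  · simp only [g]
    push_cast
    ring_nf

theorem dtft_mul_conj_add_eq_of_acf_add_eq_zero {M : ℕ} (ω : ℝ) {u₁ v₁ u₂ v₂ : ℤ → ℂ}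
    (hv₁ : ∀ k : ℤ, (k < 0 ∨ (M : ℤ) ≤ k) → v₁ k = 0)
    (hv₂ : ∀ k : ℤ, (k < 0 ∨ (M : ℤ) ≤ k) → v₂ k = 0)
    (h : ∀ τ : ℤ, τ ≠ 0 → acf M u₁ v₁ τ + acf M u₂ v₂ τ = 0) :
    dtft M ω u₁ * conj (dtft M ω v₁) + dtft M ω u₂ * conj (dtft M ω v₂) =
      acf M u₁ v₁ 0 + acf M u₂ v₂ 0 := by
  rw [dtft_mul_conj_dtft ω u₁ hv₁, dtft_mul_conj_dtft ω u₂ hv₂, ← sum_add_distrib]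
  simp only [← mul_add]
  rw [sum_eq_single 0 (fun τ _ hτ => by rw [h τ hτ, mul_zero])]
  · simp
  · intro h0
    obtain rfl : M = 0 := by simp at h0; omega
    simp [acf]

theorem sum_norm_vecMul_XQ_sq (x₁ x₂ x₃ x₄ : ℂ) {y : Fin 4 → ℂ}
    (hy : y 0 * conj (y 2) + y 1 * conj (y 3) = 0) :
    ∑ t, ‖(y ᵥ* XQ x₁ x₂ x₃ x₄) t‖ ^ 2 =
      (‖x₁‖ ^ 2 + ‖x₂‖ ^ 2 + ‖x₃‖ ^ 2 + ‖x₄‖ ^ 2) * ∑ n, ‖y n‖ ^ 2 := by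
  have hy' := congrArg conj hy
  simp only [map_add, map_mul, Complex.conj_conj, map_zero] at hy'
  apply Complex.ofReal_injective
  push_cast
  simp only [← Complex.mul_conj', Fin.sum_univ_four, vecMul, dotProduct, XQ, of_apply, cons_val',
    cons_val_zero, cons_val_one, cons_val_two, cons_val_three, empty_val', cons_val_fin_one,
    tail_cons, vecHead, map_add, map_mul, map_neg, Complex.conj_conj]
  linear_combination (x₁ * conj x₃ + conj x₁ * x₃ + x₂ * conj x₄ + conj x₂ * x₄) * (hy + hy')

/-- Theorem 1: if `{w₁,w₂}` and `{w₃,w₄}` are complementary pairs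
that are mutually orthogonal complementary, then for every `ω` the received
signal sum power over the four time slots equals `α ∑_n R_{w_n}(0)`,
independently of `ω`. -/
theorem stmt5 (M : ℕ) (w : Fin 4 → ℤ → ℂ)
    (hsupp : ∀ n, ∀ m : ℤ, (m < 0 ∨ (M : ℤ) ≤ m) → w n m = 0)
    (h12 : ∀ τ : ℤ, τ ≠ 0 → acf M (w 0) (w 0) τ + acf M (w 1) (w 1) τ = 0)
    (h34 : ∀ τ : ℤ, τ ≠ 0 → acf M (w 2) (w 2) τ + acf M (w 3) (w 3) τ = 0)
    (hcross : ∀ τ : ℤ, acf M (w 0) (w 2) τ + acf M (w 1) (w 3) τ = 0)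
    (x₁ x₂ x₃ x₄ : ℂ) (ω : ℝ) :
    ((∑ t : Fin 4, ‖∑ m : Fin M, arv M ω m *
        ((Matrix.of fun (m' : Fin M) (n : Fin 4) => w n ((m' : ℕ) : ℤ)) *
          XQ x₁ x₂ x₃ x₄) m t‖ ^ 2 : ℝ) : ℂ) =
      ((‖x₁‖ ^ 2 + ‖x₂‖ ^ 2 + ‖x₃‖ ^ 2 + ‖x₄‖ ^ 2 : ℝ) : ℂ) *
        ∑ n : Fin 4, acf M (w n) (w n) 0 := by
  let y : Fin 4 → ℂ := fun n => dtft M ω (w n)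
  have hy : arv M ω ᵥ* Matrix.of (fun (m' : Fin M) (n : Fin 4) => w n ((m' : ℕ) : ℤ)) = y := rfl
  have hflat (i j : Fin 4) (hij : ∀ τ : ℤ, τ ≠ 0 → acf M (w i) (w i) τ + acf M (w j) (w j) τ = 0) :
      y i * conj (y i) + y j * conj (y j) = acf M (w i) (w i) 0 + acf M (w j) (w j) 0 :=
    dtft_mul_conj_add_eq_of_acf_add_eq_zero ω (hsupp i) (hsupp j) hij
  have horth : y 0 * conj (y 2) + y 1 * conj (y 3) = 0 := by
    rw [dtft_mul_conj_add_eq_of_acf_add_eq_zero ω (hsupp 2) (hsupp 3) fun τ _ => hcross τ, hcross]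
  change ((∑ t, ‖(arv M ω ᵥ* (_ * XQ x₁ x₂ x₃ x₄)) t‖ ^ 2 : ℝ) : ℂ) = _
  rw [← vecMul_vecMul, hy, sum_norm_vecMul_XQ_sq x₁ x₂ x₃ x₄ horth, Complex.ofReal_mul]
  congr 1
  push_cast
  simp only [← Complex.mul_conj', Fin.sum_univ_four]
  linear_combination hflat 0 1 h12 + hflat 2 3 h34
end

section
/- Let c be a complex sequence of length L and n ∈ {0,1,2,3}. The aperiodic autocorrelation of the length-4L sequence c ⊗ u_n satisfies: R_{c⊗u_n}(τ) = R_c(τ/4) when τ is divisible by 4, and R_{c⊗u_n}(τ) = 0 otherwise. -/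
/-- Kronecker product `c ⊗ u_n` of a length-`L` sequence `c` with the `n`-th
standard basis vector of `ℂ⁴` (0-indexed): the length-`4L` sequence whose entry
at position `4l + n` is `c(l)` for `0 ≤ l ≤ L-1`, and which is zero elsewhere. -/
noncomputable def kron (L : ℕ) (c : ℤ → ℂ) (n : ℤ) : ℤ → ℂ := fun m =>
  if (m - n) % 4 = 0 ∧ 0 ≤ (m - n) / 4 ∧ (m - n) / 4 < (L : ℤ) then c ((m - n) / 4) else 0

/-!
Only the entries of `c ⊗ uₙ` at positions `4l + n` are nonzero, so in the sum defining
`R_{c⊗uₙ}(τ)` only the terms `m = 4l + n` survive, and the partner entry at `4l + n + τ`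
is `c(l + τ/4)` when `4 ∣ τ` and `0` otherwise.
-/

open Finset

theorem Finset.sum_range_mul_eq_sum_sum {M : Type*} [AddCommMonoid M] (f : ℕ → M) (k L : ℕ) :
    ∑ m ∈ range (k * L), f m = ∑ l ∈ range L, ∑ r ∈ range k, f (k * l + r) := by
  induction L with
  | zero => simp
  | succ L ih => rw [Nat.mul_succ, sum_range_add, ih, sum_range_succ]

section Kron

variable {L : ℕ} {c : ℤ → ℂ}

theorem kron_apply_of_not_dvd {n m : ℤ} (h : ¬ (4 : ℤ) ∣ m - n) : kron L c n m = 0 :=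
  if_neg fun hm => h (Int.dvd_of_emod_eq_zero hm.1)

theorem kron_apply (hc : ∀ m : ℤ, (m < 0 ∨ (L : ℤ) ≤ m) → c m = 0) (n m : ℤ) :
    kron L c n m = if (4 : ℤ) ∣ m - n then c ((m - n) / 4) else 0 := by
  by_cases h : (4 : ℤ) ∣ m - n
  · rw [if_pos h, kron, Int.emod_eq_zero_of_dvd h]
    split_ifs with hl
    · rfl
    · exact (hc _ (by omega)).symm
  · rw [if_neg h, kron_apply_of_not_dvd h]

theorem kron_apply_four_mul_add (hc : ∀ m : ℤ, (m < 0 ∨ (L : ℤ) ≤ m) → c m = 0) (n l : ℤ) :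
    kron L c n (4 * l + n) = c l := by
  simp [kron_apply hc]

theorem acf_kron_left (hc : ∀ m : ℤ, (m < 0 ∨ (L : ℤ) ≤ m) → c m = 0) {n : ℕ} (hn : n < 4)
    (v : ℤ → ℂ) (τ : ℤ) :
    acf (4 * L) (kron L c n) v τ =
      ∑ l ∈ range L, c l * starRingEnd ℂ (v (4 * l + n + τ)) := by
  rw [acf, sum_range_mul_eq_sum_sum]
  refine sum_congr rfl fun l _ => ?_
  rw [sum_eq_single_of_mem n (mem_range.2 hn)]
  · push_cast
    rw [kron_apply_four_mul_add hc]
  · intro r hr hrn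
    rw [mem_range] at hr
    rw [kron_apply_of_not_dvd (by push_cast; omega), zero_mul]

end Kron

/-- `R_{c⊗u_n}(τ) = R_c(τ/4)` if `4 ∣ τ`, and `0` otherwise. -/
theorem stmt7 (L : ℕ) (c : ℤ → ℂ)
    (hc : ∀ m : ℤ, (m < 0 ∨ (L : ℤ) ≤ m) → c m = 0)
    (n : Fin 4) (τ : ℤ) :
    acf (4 * L) (kron L c ((n : ℕ) : ℤ)) (kron L c ((n : ℕ) : ℤ)) τ =
      if (4 : ℤ) ∣ τ then acf L c c (τ / 4) else 0 := by
  rw [acf_kron_left hc n.isLt]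
  split_ifs with hτ
  · obtain ⟨t, rfl⟩ := hτ
    rw [Int.mul_ediv_cancel_left _ four_ne_zero, acf]
    refine sum_congr rfl fun l _ => ?_
    rw [show 4 * (l : ℤ) + n + 4 * t = 4 * (l + t) + n by ring, kron_apply_four_mul_add hc]
  · refine sum_eq_zero fun l _ => ?_
    rw [kron_apply_of_not_dvd (by omega), map_zero, mul_zero]
end

section
/- Let c and d be complex sequences of length L and n, k ∈ {0,1,2,3}. The aperiodic crosscorrelation of the length-4L sequences c ⊗ u_n and d ⊗ u_k satisfies: R_{c⊗u_n, d⊗u_k}(τ) = R_{c,d}((τ − (k − n))/4) when τ ≡ k − n (mod 4), and R_{c⊗u_n, d⊗u_k}(τ) = 0 otherwise. -/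
/-! The entries of `c ⊗ u_n` are those of `c`, spread out along the residue class `n` mod `4`.
Hence the product `(c ⊗ u_n)(m) · conj((d ⊗ u_k)(m + τ))` can only be nonzero when both
`m ≡ n` and `m + τ ≡ k` mod `4`, which forces `τ ≡ k - n`; reindexing `m = 4l + n` then turns
the correlation sum of length `4L` into that of `c` and `d` at lag `(τ - (k - n)) / 4`. -/

open Finset

section Kron

variable {L : ℕ} {c : ℤ → ℂ} {n : ℤ}

theorem kron_four_mul_add (j : ℤ) :
    kron L c n (4 * j + n) = if 0 ≤ j ∧ j < L then c j else 0 := by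
  have hsub : 4 * j + n - n = 4 * j := by ring
  simp only [kron, hsub, Int.mul_emod_right, Int.mul_ediv_cancel_left _ four_ne_zero, true_and]

theorem kron_four_mul_add_of_support (hc : ∀ m : ℤ, (m < 0 ∨ (L : ℤ) ≤ m) → c m = 0) (j : ℤ) :
    kron L c n (4 * j + n) = c j := by
  rw [kron_four_mul_add]
  split_ifs with hj
  · rfl
  · exact (hc j (by omega)).symm

theorem kron_eq_zero_of_not_dvd {m : ℤ} (h : ¬(4 : ℤ) ∣ m - n) : kron L c n m = 0 :=
  if_neg fun hm => h (Int.dvd_of_emod_eq_zero hm.1)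

theorem exists_eq_four_mul_add_of_kron_ne_zero {m : ℤ} (h : kron L c n m ≠ 0) :
    ∃ l : ℕ, l < L ∧ m = 4 * l + n := by
  by_contra! hm
  refine h (if_neg fun ⟨hmod, hpos, hlt⟩ => hm ((m - n) / 4).toNat (by omega) ?_)
  omega

theorem sum_range_kron_mul {r : ℕ} (hr : r < 4) (F : ℤ → ℂ) :
    ∑ m ∈ range (4 * L), kron L c r m * F m = ∑ l ∈ range L, c l * F (4 * l + r) := by
  symm
  refine sum_of_injOn (fun l => 4 * l + r) (fun a _ b _ hab => by simp only at hab; omega)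
    (fun l hl => by simp only [coe_range, Set.mem_Iio] at hl ⊢; omega) ?_ ?_
  · intro m _ hm
    by_contra hne
    obtain ⟨l, hl, hlm⟩ := exists_eq_four_mul_add_of_kron_ne_zero (left_ne_zero_of_mul hne)
    exact hm ⟨l, by simpa using hl, by simp only; omega⟩
  · intro l hl
    push_cast
    rw [kron_four_mul_add, if_pos ⟨by positivity, by exact_mod_cast mem_range.mp hl⟩]

end Kron

theorem stmt8_general (L : ℕ) (c d : ℤ → ℂ)
    (hd : ∀ m : ℤ, (m < 0 ∨ (L : ℤ) ≤ m) → d m = 0)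
    (n k : Fin 4) (τ : ℤ) :
    acf (4 * L) (kron L c ((n : ℕ) : ℤ)) (kron L d ((k : ℕ) : ℤ)) τ =
      if (4 : ℤ) ∣ (τ - (((k : ℕ) : ℤ) - ((n : ℕ) : ℤ))) then
        acf L c d ((τ - (((k : ℕ) : ℤ) - ((n : ℕ) : ℤ))) / 4)
      else 0 := by
  rw [acf, sum_range_kron_mul n.isLt fun x => starRingEnd ℂ (kron L d k (x + τ))]
  split_ifs with hdvd
  · obtain ⟨s, hs⟩ := hdvd
    rw [hs, Int.mul_ediv_cancel_left _ four_ne_zero, acf]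
    refine sum_congr rfl fun l _ => ?_
    have hidx : 4 * (l : ℤ) + n + τ = 4 * (l + s) + k := by omega
    rw [hidx, kron_four_mul_add_of_support hd]
  · refine sum_eq_zero fun l _ => ?_
    rw [kron_eq_zero_of_not_dvd (fun h => hdvd ?_), map_zero, mul_zero]
    omega

/-- `R_{c⊗u_n, d⊗u_k}(τ) = R_{c,d}((τ-(k-n))/4)` when
`τ ≡ k - n (mod 4)`, and `0` otherwise. -/
theorem stmt8 (L : ℕ) (c d : ℤ → ℂ)
    (hc : ∀ m : ℤ, (m < 0 ∨ (L : ℤ) ≤ m) → c m = 0)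
    (hd : ∀ m : ℤ, (m < 0 ∨ (L : ℤ) ≤ m) → d m = 0)
    (n k : Fin 4) (τ : ℤ) :
    acf (4 * L) (kron L c ((n : ℕ) : ℤ)) (kron L d ((k : ℕ) : ℤ)) τ =
      if (4 : ℤ) ∣ (τ - (((k : ℕ) : ℤ) - ((n : ℕ) : ℤ))) then
        acf L c d ((τ - (((k : ℕ) : ℤ) - ((n : ℕ) : ℤ))) / 4)
      else 0 :=
  stmt8_general L c d hd n k τ
end

section
/- Let c_1, c_2, c_3, c_4 be sequences of length L with entries in {1, −1}, set M = 4L, let W_Q be the M×4 matrix whose n-th column is √(4/M)·(c_n ⊗ u_n), and let x_1,...,x_4 be complex numbers each of modulus 1/2, with X_Q the TBH code matrix of x_1,...,x_4. Then every entry of the M×4 matrix S = W_Q·X_Q has modulus exactly 1/√M; i.e., the instantaneous transmit power is equal across all antennas at every time slot. -/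
open Matrix

/-- The `M × 4` precoding matrix `W_Q` with `n`-th column `√(4/M) (c_n ⊗ u_n)`,
where `M = 4L`. -/
noncomputable def WQ (L : ℕ) (c : Fin 4 → ℤ → ℂ) : Matrix (Fin (4 * L)) (Fin 4) ℂ :=
  Matrix.of fun m n =>
    (Real.sqrt (4 / (4 * (L : ℝ))) : ℂ) * kron L (c n) ((n : ℕ) : ℤ) ((m : ℕ) : ℤ)

lemma kron_natCast_apply (L : ℕ) (c : ℤ → ℂ) {n m : ℕ} (hn : n < 4) (hm : m < 4 * L) :
    kron L c n m = if m % 4 = n then c ((m : ℤ) / 4) else 0 := by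
  unfold kron
  split_ifs
  · congr 1
    omega
  all_goals first | omega | rfl

lemma WQ_apply (L : ℕ) (c : Fin 4 → ℤ → ℂ) (m : Fin (4 * L)) (j : Fin 4) :
    WQ L c m j =
      if (m : ℕ) % 4 = j then (Real.sqrt (4 / (4 * (L : ℝ))) : ℂ) * c j (((m : ℕ) : ℤ) / 4)
      else 0 := by
  rw [WQ, of_apply, kron_natCast_apply L (c j) j.isLt m.isLt, mul_ite, mul_zero]

lemma WQ_mul_apply {k : ℕ} (L : ℕ) (c : Fin 4 → ℤ → ℂ) (X : Matrix (Fin 4) (Fin k) ℂ)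
    (m : Fin (4 * L)) (t : Fin k) {i : Fin 4} (hi : (m : ℕ) % 4 = i) :
    (WQ L c * X) m t =
      (Real.sqrt (4 / (4 * (L : ℝ))) : ℂ) * c i (((m : ℕ) : ℤ) / 4) * X i t := by
  rw [mul_apply, Finset.sum_eq_single i, WQ_apply, if_pos hi]
  · intro j _ hji
    rw [WQ_apply, if_neg (by omega), zero_mul]
  · exact fun hi' => absurd (Finset.mem_univ i) hi'

lemma norm_XQ_apply {r : ℝ} {x₁ x₂ x₃ x₄ : ℂ}
    (hx₁ : ‖x₁‖ = r) (hx₂ : ‖x₂‖ = r) (hx₃ : ‖x₃‖ = r) (hx₄ : ‖x₄‖ = r) (i t : Fin 4) :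
    ‖XQ x₁ x₂ x₃ x₄ i t‖ = r := by
  fin_cases i <;> fin_cases t <;> simp [XQ, hx₁, hx₂, hx₃, hx₄]

lemma sqrt_four_div_mul_half (a : ℝ) : Real.sqrt (4 / a) * (1 / 2) = 1 / Real.sqrt a := by
  rw [Real.sqrt_div zero_le_four, show Real.sqrt 4 = 2 by
    rw [show (4 : ℝ) = 2 ^ 2 by norm_num, Real.sqrt_sq zero_le_two]]
  ring

theorem stmt10_general (L : ℕ) (c : Fin 4 → ℤ → ℂ)
    (hpm : ∀ n, ∀ l : ℤ, 0 ≤ l → l < (L : ℤ) → (c n l = 1 ∨ c n l = -1))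
    (x₁ x₂ x₃ x₄ : ℂ)
    (hx₁ : ‖x₁‖ = 1 / 2) (hx₂ : ‖x₂‖ = 1 / 2) (hx₃ : ‖x₃‖ = 1 / 2) (hx₄ : ‖x₄‖ = 1 / 2) :
    ∀ (m : Fin (4 * L)) (t : Fin 4),
      ‖(WQ L c * XQ x₁ x₂ x₃ x₄) m t‖ = 1 / Real.sqrt (4 * (L : ℝ)) := by
  intro m t
  have hm : (m : ℕ) < 4 * L := m.isLt
  let i : Fin 4 := ⟨(m : ℕ) % 4, Nat.mod_lt _ four_pos⟩
  have hc : ‖c i (((m : ℕ) : ℤ) / 4)‖ = 1 := by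
    rcases hpm i (((m : ℕ) : ℤ) / 4) (by omega) (by omega) with h | h <;> simp [h]
  rw [WQ_mul_apply L c _ m t (i := i) rfl, norm_mul, norm_mul, hc, mul_one,
    norm_XQ_apply hx₁ hx₂ hx₃ hx₄, Complex.norm_real, Real.norm_of_nonneg (Real.sqrt_nonneg _),
    sqrt_four_div_mul_half]

/-- for ±1-valued sequences `c₁,...,c₄` and symbols of modulus
`1/2`, every entry of `S = W_Q X_Q` has modulus exactly `1/√M` with `M = 4L`. -/
theorem stmt10 (L : ℕ) (hL : 0 < L) (c : Fin 4 → ℤ → ℂ)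
    (hpm : ∀ n, ∀ l : ℤ, 0 ≤ l → l < (L : ℤ) → (c n l = 1 ∨ c n l = -1))
    (x₁ x₂ x₃ x₄ : ℂ)
    (hx₁ : ‖x₁‖ = 1 / 2) (hx₂ : ‖x₂‖ = 1 / 2) (hx₃ : ‖x₃‖ = 1 / 2) (hx₄ : ‖x₄‖ = 1 / 2) :
    ∀ (m : Fin (4 * L)) (t : Fin 4),
      ‖(WQ L c * XQ x₁ x₂ x₃ x₄) m t‖ = 1 / Real.sqrt (4 * (L : ℝ)) :=
  stmt10_general L c hpm x₁ x₂ x₃ x₄ hx₁ hx₂ hx₃ hx₄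
end

section
/- Let c_1, c_2, c_3, c_4 be sequences of length L with entries in {1, −1} such that {c_1, c_2} and {c_3, c_4} are complementary pairs, i.e., R_{c_1}(τ) + R_{c_2}(τ) = 0 and R_{c_3}(τ) + R_{c_4}(τ) = 0 for all τ ≠ 0, and the two pairs are mutually orthogonal complementary, i.e., R_{c_1,c_3}(τ) + R_{c_2,c_4}(τ) = 0 for all τ. Set M = 4L, let W_Q be the M×4 matrix whose n-th column is √(4/M)·(c_n ⊗ u_n), let x_1,...,x_4 be complex numbers each of modulus 1/2, let X_Q be the TBH code matrix of x_1,...,x_4, and let a(ω) = (1, e^{-iω},..., e^{-i(M-1)ω}). Then for every real ω, Σ_{t=1}^{4} |a(ω)·(W_Q·X_Q) e_t|² = 4. -/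
/-!
Put `f = a(ω)ᵀ W_Q`, so the received powers are `∑ₜ |(f X_Q)ₜ|²`. Since
`X_Q X_Qᴴ = (∑ |xᵢ|²) I + β J`, where `J` swaps slots 1 ↔ 3 and 2 ↔ 4 and
`β = 2 Re (x₁ x̄₃ + x₂ x̄₄)`, this equals `∑ₙ |fₙ|² + 2β Re (f₁ f̄₃ + f₂ f̄₄)`.
Up to the phase `e^{-i(n-1)ω}`, `fₙ` is `Pₙ(4ω) / √L` with `Pₙ(θ) = ∑ₗ cₙ(l) e^{-ilθ}`, and
`Pₙ P̄ₙ'` is the Fourier series of `R_{cₙ,cₙ'}`. Complementarity leaves only the `τ = 0`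
terms, so `|P₁|² + |P₂|² = |P₃|² + |P₄|² = 2L` and `∑ₙ |fₙ|² = 4`. Mutual orthogonality
gives `P₁ P̄₃ + P₂ P̄₄ = 0`, and both cross terms carry the same phase `e^{2iω}`, so the
`β` term vanishes.
-/

open Matrix

open Finset ComplexConjugate

lemma sum_range_eq_sum_Icc_add {M : Type*} [AddCommMonoid M] (L : ℕ) (h : ℤ → M)
    (hh : ∀ k, (k < 0 ∨ (L : ℤ) ≤ k) → h k = 0) {m : ℤ} (hm₀ : 0 ≤ m) (hmL : m ≤ L) :
    ∑ k ∈ range L, h k = ∑ τ ∈ Icc (-(L : ℤ)) L, h (m + τ) := by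
  calc ∑ k ∈ range L, h k = ∑ k ∈ (range L).map Nat.castEmbedding, h k :=
        (sum_map (range L) Nat.castEmbedding h).symm
    _ = ∑ k ∈ (Icc (-(L : ℤ)) L).map (addLeftEmbedding m), h k := by
        rw [map_add_left_Icc]
        refine sum_subset (fun k hk => ?_) (fun k _ hk => hh k ?_)
        · obtain ⟨n, hn, rfl⟩ := mem_map.1 hk
          simp only [mem_range] at hn
          simp only [mem_Icc, Nat.castEmbedding_apply]
          omega
        · by_contra! hk'
          refine hk (mem_map.2 ⟨k.toNat, mem_range.2 (by omega), ?_⟩)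
          simp only [Nat.castEmbedding_apply]
          omega
    _ = ∑ τ ∈ Icc (-(L : ℤ)) L, h (m + τ) := sum_map _ _ _

noncomputable def signalPoly (L : ℕ) (w : ℤ → ℂ) (θ : ℝ) : ℂ :=
  ∑ m ∈ range L, w m * Complex.exp (-(m * θ * Complex.I))

lemma conj_signalPoly (L : ℕ) (w : ℤ → ℂ) (θ : ℝ) :
    conj (signalPoly L w θ) = ∑ m ∈ range L, conj (w m) * Complex.exp (m * θ * Complex.I) := by
  simp only [signalPoly, map_sum, map_mul, ← Complex.exp_conj, map_neg, Complex.conj_ofReal,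
    Complex.conj_I, map_natCast]
  simp

lemma signalPoly_mul_conj (L : ℕ) (w v : ℤ → ℂ) (hv : ∀ l, (l < 0 ∨ (L : ℤ) ≤ l) → v l = 0)
    (θ : ℝ) :
    signalPoly L w θ * conj (signalPoly L v θ) =
      ∑ τ ∈ Icc (-(L : ℤ)) L, acf L w v τ * Complex.exp (τ * θ * Complex.I) := by
  have hshift (m : ℕ) (hm : m ∈ range L) :
      ∑ k ∈ range L, conj (v k) * Complex.exp (k * θ * Complex.I) =
        ∑ τ ∈ Icc (-(L : ℤ)) L, conj (v (m + τ)) * Complex.exp ((m + τ : ℤ) * θ * Complex.I) :=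
    sum_range_eq_sum_Icc_add L (fun k => conj (v k) * Complex.exp (k * θ * Complex.I))
      (fun k hk => by simp [hv k hk]) (by positivity) (by simp at hm; omega)
  rw [conj_signalPoly, signalPoly, sum_mul_sum]
  rw [sum_congr rfl fun m hm => by rw [← mul_sum, hshift m hm, mul_sum], sum_comm]
  refine sum_congr rfl fun τ _ => ?_
  rw [acf, sum_mul]
  refine sum_congr rfl fun m _ => ?_
  rw [mul_mul_mul_comm, mul_assoc, ← Complex.exp_add]
  push_cast
  ring_nf

lemma signalPoly_mul_conj_add_of_acf_add_eq_zero (L : ℕ) (w₁ v₁ w₂ v₂ : ℤ → ℂ)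
    (hv₁ : ∀ l, (l < 0 ∨ (L : ℤ) ≤ l) → v₁ l = 0) (hv₂ : ∀ l, (l < 0 ∨ (L : ℤ) ≤ l) → v₂ l = 0)
    (h : ∀ τ, τ ≠ 0 → acf L w₁ v₁ τ + acf L w₂ v₂ τ = 0) (θ : ℝ) :
    signalPoly L w₁ θ * conj (signalPoly L v₁ θ) + signalPoly L w₂ θ * conj (signalPoly L v₂ θ) =
      acf L w₁ v₁ 0 + acf L w₂ v₂ 0 := by
  rw [signalPoly_mul_conj L w₁ v₁ hv₁, signalPoly_mul_conj L w₂ v₂ hv₂, ← sum_add_distrib,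
    sum_eq_single_of_mem 0 (by simp) fun τ _ hτ => by rw [← add_mul, h τ hτ, zero_mul]]
  simp

lemma acf_self_zero_of_norm_eq_one (L : ℕ) (w : ℤ → ℂ)
    (hw : ∀ l : ℤ, 0 ≤ l → l < L → ‖w l‖ = 1) : acf L w w 0 = L := by
  rw [acf, sum_congr rfl fun m hm => ?_, sum_const, card_range, nsmul_one]
  rw [add_zero, Complex.mul_conj', hw m (by positivity) (by simpa using hm)]
  simp

lemma sum_range_mul_kron (L : ℕ) (c : ℤ → ℂ) {n : ℕ} (hn : n < 4) (g : ℕ → ℂ) :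
    ∑ m ∈ range (4 * L), g m * kron L c n m = ∑ l ∈ range L, g (n + 4 * l) * c l := by
  have hkron (l : ℕ) (hl : l ∈ range L) : kron L c n ↑(n + 4 * l) = c l := by
    simp only [mem_range] at hl
    rw [kron, if_pos (by push_cast; omega)]
    congr 1
    push_cast
    omega
  symm
  calc ∑ l ∈ range L, g (n + 4 * l) * c l
        = ∑ l ∈ range L, g (n + 4 * l) * kron L c n ↑(n + 4 * l) :=
        sum_congr rfl fun l hl => by rw [hkron l hl]
    _ = ∑ m ∈ (range L).image (n + 4 * ·), g m * kron L c n m :=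
        (sum_image (f := fun m => g m * kron L c n m) fun a _ b _ hab => by omega).symm
    _ = ∑ m ∈ range (4 * L), g m * kron L c n m := by
        refine sum_subset (fun m hm => ?_) (fun m _ hm => ?_)
        · obtain ⟨l, hl, rfl⟩ := mem_image.1 hm
          simp only [mem_range] at hl ⊢
          omega
        · rw [kron, if_neg, mul_zero]
          rintro ⟨h4, h0, hL⟩
          exact hm (mem_image.2 ⟨((m - n : ℤ) / 4).toNat, mem_range.2 (by omega), by omega⟩)

lemma vecMul_arv_WQ (L : ℕ) (c : Fin 4 → ℤ → ℂ) (ω : ℝ) (n : Fin 4) :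
    (arv (4 * L) ω ᵥ* WQ L c) n =
      Real.sqrt (4 / (4 * L)) * Complex.exp (-(n * ω * Complex.I)) *
        signalPoly L (c n) (4 * ω) := by
  simp only [vecMul, dotProduct, WQ, of_apply, arv, mul_left_comm _ (Real.sqrt (4 / (4 * L)) : ℂ),
    ← mul_sum]
  rw [Fin.sum_univ_eq_sum_range (fun m : ℕ => Complex.exp (-Complex.I * m * ω) * kron L (c n) n m),
    sum_range_mul_kron L (c n) n.isLt, mul_assoc]
  congr 1
  rw [signalPoly, mul_sum]
  refine sum_congr rfl fun l _ => ?_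
  rw [mul_left_comm, ← Complex.exp_add]
  push_cast
  ring_nf

lemma vecMul_arv_WQ_mul_conj (L : ℕ) (c : Fin 4 → ℤ → ℂ) (ω : ℝ) (n n' : Fin 4) :
    (arv (4 * L) ω ᵥ* WQ L c) n * conj ((arv (4 * L) ω ᵥ* WQ L c) n') =
      Complex.exp ((n' - n : ℂ) * ω * Complex.I) *
        (signalPoly L (c n) (4 * ω) * conj (signalPoly L (c n') (4 * ω))) / L := by
  have hκ : (Real.sqrt (4 / (4 * L)) : ℂ) * Real.sqrt (4 / (4 * L)) = 1 / L := by
    rw [← Complex.ofReal_mul, Real.mul_self_sqrt (by positivity), div_mul_cancel_left₀ four_ne_zero]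
    simp
  have hexp : Complex.exp (-(n * ω * Complex.I)) * conj (Complex.exp (-(n' * ω * Complex.I))) =
      Complex.exp ((n' - n : ℂ) * ω * Complex.I) := by
    rw [← Complex.exp_conj, ← Complex.exp_add]
    simp only [map_neg, map_mul, map_natCast, Complex.conj_ofReal, Complex.conj_I]
    ring_nf
  rw [vecMul_arv_WQ, vecMul_arv_WQ, map_mul, map_mul, Complex.conj_ofReal, ← hexp]
  linear_combination (Complex.exp (-(n * ω * Complex.I)) *
    conj (Complex.exp (-(n' * ω * Complex.I))) * signalPoly L (c n) (4 * ω) *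
      conj (signalPoly L (c n') (4 * ω))) * hκ

lemma sum_norm_sq_vecMul_XQ (x₁ x₂ x₃ x₄ : ℂ) (f : Fin 4 → ℂ) :
    ∑ t, ‖(f ᵥ* XQ x₁ x₂ x₃ x₄) t‖ ^ 2 =
      (‖x₁‖ ^ 2 + ‖x₂‖ ^ 2 + ‖x₃‖ ^ 2 + ‖x₄‖ ^ 2) * ∑ n, ‖f n‖ ^ 2 +
        4 * (x₁ * conj x₃ + x₂ * conj x₄).re * (f 0 * conj (f 2) + f 1 * conj (f 3)).re := by
  apply Complex.ofReal_injective
  push_cast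
  simp only [← Complex.mul_conj', Complex.re_eq_add_conj]
  simp only [vecMul, dotProduct, XQ, of_apply, cons_val', cons_val_fin_one, Fin.sum_univ_four,
    cons_val_zero, cons_val_one, Matrix.cons_val, map_add, map_mul, mul_neg, map_neg,
    Complex.conj_conj]
  ring

lemma sum_norm_sq_vecMul_arv_WQ {L : ℕ} (hL : 0 < L) {c : Fin 4 → ℤ → ℂ}
    (hsupp : ∀ n, ∀ l : ℤ, (l < 0 ∨ (L : ℤ) ≤ l) → c n l = 0)
    (hnorm : ∀ n, ∀ l : ℤ, 0 ≤ l → l < (L : ℤ) → ‖c n l‖ = 1)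
    (h01 : ∀ τ : ℤ, τ ≠ 0 → acf L (c 0) (c 0) τ + acf L (c 1) (c 1) τ = 0)
    (h23 : ∀ τ : ℤ, τ ≠ 0 → acf L (c 2) (c 2) τ + acf L (c 3) (c 3) τ = 0) (ω : ℝ) :
    ∑ n, ‖(arv (4 * L) ω ᵥ* WQ L c) n‖ ^ 2 = 4 := by
  have hacf (n : Fin 4) : acf L (c n) (c n) 0 = L := acf_self_zero_of_norm_eq_one L (c n) (hnorm n)
  have h₀₁ := signalPoly_mul_conj_add_of_acf_add_eq_zero L _ _ _ _ (hsupp 0) (hsupp 1) h01 (4 * ω)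
  have h₂₃ := signalPoly_mul_conj_add_of_acf_add_eq_zero L _ _ _ _ (hsupp 2) (hsupp 3) h23 (4 * ω)
  rw [hacf, hacf] at h₀₁ h₂₃
  have hL' : (L : ℂ) ≠ 0 := by exact_mod_cast hL.ne'
  apply Complex.ofReal_injective
  push_cast
  simp only [← Complex.mul_conj', Fin.sum_univ_four, vecMul_arv_WQ_mul_conj, sub_self, zero_mul,
    Complex.exp_zero, one_mul]
  field_simp
  linear_combination h₀₁ + h₂₃

lemma vecMul_arv_WQ_cross_eq_zero {L : ℕ} {c : Fin 4 → ℤ → ℂ}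
    (hsupp₂ : ∀ l : ℤ, (l < 0 ∨ (L : ℤ) ≤ l) → c 2 l = 0)
    (hsupp₃ : ∀ l : ℤ, (l < 0 ∨ (L : ℤ) ≤ l) → c 3 l = 0)
    (hcross : ∀ τ : ℤ, acf L (c 0) (c 2) τ + acf L (c 1) (c 3) τ = 0) (ω : ℝ) :
    (arv (4 * L) ω ᵥ* WQ L c) 0 * conj ((arv (4 * L) ω ᵥ* WQ L c) 2) +
      (arv (4 * L) ω ᵥ* WQ L c) 1 * conj ((arv (4 * L) ω ᵥ* WQ L c) 3) = 0 := by
  have h := signalPoly_mul_conj_add_of_acf_add_eq_zero L _ _ _ _ hsupp₂ hsupp₃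
    (fun τ _ => hcross τ) (4 * ω)
  rw [hcross 0] at h
  rw [vecMul_arv_WQ_mul_conj, vecMul_arv_WQ_mul_conj]
  norm_num
  linear_combination Complex.exp (2 * ω * Complex.I) / L * h

/-- for ±1-valued binary OCCs `{c₁,c₂}`, `{c₃,c₄}` (complementary
pairs, mutually orthogonal complementary) and symbols of modulus `1/2`, the
received signal sum power over the four time slots is constantly `4` at any
angle `ω`. -/
theorem stmt11 (L : ℕ) (hL : 0 < L) (c : Fin 4 → ℤ → ℂ)
    (hsupp : ∀ n, ∀ l : ℤ, (l < 0 ∨ (L : ℤ) ≤ l) → c n l = 0)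
    (hpm : ∀ n, ∀ l : ℤ, 0 ≤ l → l < (L : ℤ) → (c n l = 1 ∨ c n l = -1))
    (h12 : ∀ τ : ℤ, τ ≠ 0 → acf L (c 0) (c 0) τ + acf L (c 1) (c 1) τ = 0)
    (h34 : ∀ τ : ℤ, τ ≠ 0 → acf L (c 2) (c 2) τ + acf L (c 3) (c 3) τ = 0)
    (hcross : ∀ τ : ℤ, acf L (c 0) (c 2) τ + acf L (c 1) (c 3) τ = 0)
    (x₁ x₂ x₃ x₄ : ℂ)
    (hx₁ : ‖x₁‖ = 1 / 2) (hx₂ : ‖x₂‖ = 1 / 2) (hx₃ : ‖x₃‖ = 1 / 2) (hx₄ : ‖x₄‖ = 1 / 2)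
    (ω : ℝ) :
    ∑ t : Fin 4,
      ‖∑ m : Fin (4 * L), arv (4 * L) ω m * (WQ L c * XQ x₁ x₂ x₃ x₄) m t‖ ^ 2 = 4 := by
  have hnorm (n : Fin 4) (l : ℤ) (h₀ : 0 ≤ l) (hl : l < L) : ‖c n l‖ = 1 := by
    rcases hpm n l h₀ hl with h | h <;> simp [h]
  have hreceived (t : Fin 4) : ∑ m, arv (4 * L) ω m * (WQ L c * XQ x₁ x₂ x₃ x₄) m t =
      (arv (4 * L) ω ᵥ* WQ L c ᵥ* XQ x₁ x₂ x₃ x₄) t := by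
    rw [vecMul_vecMul]
    rfl
  simp only [hreceived]
  rw [sum_norm_sq_vecMul_XQ, hx₁, hx₂, hx₃, hx₄, sum_norm_sq_vecMul_arv_WQ hL hsupp hnorm h12 h34,
    vecMul_arv_WQ_cross_eq_zero (hsupp 2) (hsupp 3) hcross]
  norm_num
end
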